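/- arXiv:2505.10519 — 3 statements merged into one kernel-verified Lean document; each statement's English description precedes it below -/
import Mathlib

section
/- Under NURVA and individual positivity (π_i(d) > 0 for every unit i), the bias of the conservative variance estimator is exactly E[V̂_C] − Var[ŷ(d)] = N^{-2} ∑_{(i,j) : π_ij(d) = 0} (ȳ_i(d) + ȳ_j(d))² / 2, where V̂_C(ω) = N^{-2} ∑_{i,j : π_ij(d) > 0} ((π_ij(d) − π_i(d) π_j(d)) / (π_i(d) π_j(d))) y_i(ω) y_j(ω) 1[g_i(ω)=d and g_j(ω)=d] / π_ij(d) + N^{-2} ∑_{i,j : π_ij(d) = 0} ( (y_i(ω)²/2) · 1[g_i(ω)=d]/π_i(d) + (y_j(ω)²/2) · 1[g_j(ω)=d]/π_j(d) ). -/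
open Finset

/-- Expectation with respect to a pmf `p` on a finite sample space. -/
noncomputable def expec {Ω : Type*} [Fintype Ω] (p : Ω → ℝ) (X : Ω → ℝ) : ℝ :=
  ∑ ω, p ω * X ω

/-- Variance with respect to a pmf `p` on a finite sample space. -/
noncomputable def vari {Ω : Type*} [Fintype Ω] (p : Ω → ℝ) (X : Ω → ℝ) : ℝ :=
  expec p (fun ω => (X ω - expec p X) ^ 2)

/-- Exposure probability `π_i(d)`. -/
noncomputable def piP {Ω E : Type*} [Fintype Ω] [DecidableEq E] {N : ℕ}
    (p : Ω → ℝ) (g : Fin N → Ω → E) (d : E) (i : Fin N) : ℝ :=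
  ∑ ω ∈ Finset.univ.filter (fun ω => g i ω = d), p ω

/-- Joint exposure probability `π_ij(d)`. -/
noncomputable def piP2 {Ω E : Type*} [Fintype Ω] [DecidableEq E] {N : ℕ}
    (p : Ω → ℝ) (g : Fin N → Ω → E) (d : E) (i j : Fin N) : ℝ :=
  ∑ ω ∈ Finset.univ.filter (fun ω => g i ω = d ∧ g j ω = d), p ω

/-- Expected potential outcome (EPO) `ȳ_i(d)`. -/
noncomputable def epo {Ω E : Type*} [Fintype Ω] [DecidableEq E] {N : ℕ}
    (p : Ω → ℝ) (y : Fin N → Ω → ℝ) (g : Fin N → Ω → E) (d : E) (i : Fin N) : ℝ :=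
  (∑ ω ∈ Finset.univ.filter (fun ω => g i ω = d), y i ω * p ω) / piP p g d i

/-- Average expected potential outcome (AEPO) `ȳ(d)`. -/
noncomputable def aepo {Ω E : Type*} [Fintype Ω] [DecidableEq E] {N : ℕ}
    (p : Ω → ℝ) (y : Fin N → Ω → ℝ) (g : Fin N → Ω → E) (d : E) : ℝ :=
  (1 / (N : ℝ)) * ∑ i, epo p y g d i

/-- Horvitz–Thompson estimator `ŷ(d)` as a random variable on `Ω`. -/
noncomputable def ht {Ω E : Type*} [Fintype Ω] [DecidableEq E] {N : ℕ}
    (p : Ω → ℝ) (y : Fin N → Ω → ℝ) (g : Fin N → Ω → E) (d : E) (ω : Ω) : ℝ :=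
  (1 / (N : ℝ)) * ∑ i, y i ω * (if g i ω = d then (1 : ℝ) else 0) / piP p g d i

/-- No Unmodeled Revealable Variation Assumption (NURVA). -/
def NURVA {Ω E : Type*} {N : ℕ}
    (p : Ω → ℝ) (y : Fin N → Ω → ℝ) (g : Fin N → Ω → E) : Prop :=
  ∀ ω ω', 0 < p ω → 0 < p ω' → ∀ i : Fin N, g i ω = g i ω' → y i ω = y i ω'

section Aux
variable {Ω E : Type*} [Fintype Ω] [DecidableEq E] {N : ℕ}
variable (p : Ω → ℝ) (y : Fin N → Ω → ℝ) (g : Fin N → Ω → E) (d : E)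

lemma piP2_nonneg (hp : ∀ ω, 0 ≤ p ω) (i j : Fin N) : 0 ≤ piP2 p g d i j :=
  Finset.sum_nonneg fun ω _ => hp ω

lemma nurva_val (hp : ∀ ω, 0 ≤ p ω) (hnurva : NURVA p y g) (i : Fin N)
    (hpi : 0 < piP p g d i) (ω : Ω) (hω : 0 < p ω) (hg : g i ω = d) :
    y i ω = epo p y g d i := by
  have hsum : ∑ ω' ∈ Finset.univ.filter (fun ω' => g i ω' = d), y i ω' * p ω'
      = y i ω * piP p g d i := by
    rw [piP, Finset.mul_sum]
    refine Finset.sum_congr rfl fun ω' hω' => ?_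
    rcases (hp ω').lt_or_eq with h | h
    · rw [hnurva ω' ω h hω i (by rw [(Finset.mem_filter.mp hω').2, hg])]
    · rw [← h, mul_zero, mul_zero]
  rw [epo, hsum, mul_div_assoc, div_self hpi.ne', mul_one]

lemma key1 (i : Fin N) (hpi : 0 < piP p g d i) :
    ∑ ω ∈ Finset.univ.filter (fun ω => g i ω = d), y i ω * p ω
      = epo p y g d i * piP p g d i := by
  rw [epo, div_mul_cancel₀ _ hpi.ne']

lemma key2 (hp : ∀ ω, 0 ≤ p ω) (hnurva : NURVA p y g) (i : Fin N)
    (hpi : 0 < piP p g d i) :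
    ∑ ω ∈ Finset.univ.filter (fun ω => g i ω = d), y i ω ^ 2 * p ω
      = epo p y g d i ^ 2 * piP p g d i := by
  have h : ∑ ω ∈ Finset.univ.filter (fun ω => g i ω = d), y i ω ^ 2 * p ω
      = epo p y g d i * ∑ ω ∈ Finset.univ.filter (fun ω => g i ω = d), y i ω * p ω := by
    rw [Finset.mul_sum]
    refine Finset.sum_congr rfl fun ω hω => ?_
    rcases (hp ω).lt_or_eq with h | h
    · rw [nurva_val p y g d hp hnurva i hpi ω h (Finset.mem_filter.mp hω).2]; ring
    · rw [← h]; ring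
  rw [h, key1 p y g d i hpi]; ring

lemma key3 (hp : ∀ ω, 0 ≤ p ω) (hnurva : NURVA p y g) (i j : Fin N)
    (hpi : 0 < piP p g d i) (hpj : 0 < piP p g d j) :
    ∑ ω ∈ Finset.univ.filter (fun ω => g i ω = d ∧ g j ω = d), y i ω * y j ω * p ω
      = epo p y g d i * epo p y g d j * piP2 p g d i j := by
  rw [piP2, Finset.mul_sum]
  refine Finset.sum_congr rfl fun ω hω => ?_
  obtain ⟨-, hgi, hgj⟩ := Finset.mem_filter.mp hω
  rcases (hp ω).lt_or_eq with h | h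
  · rw [nurva_val p y g d hp hnurva i hpi ω h hgi,
        nurva_val p y g d hp hnurva j hpj ω h hgj]
  · rw [← h]; ring

lemma E_single (hp : ∀ ω, 0 ≤ p ω) (i : Fin N) (hpi : 0 < piP p g d i) :
    ∑ ω, p ω * (y i ω * (if g i ω = d then (1 : ℝ) else 0) / piP p g d i)
      = epo p y g d i := by
  have h : ∀ ω ∈ (Finset.univ : Finset Ω),
      p ω * (y i ω * (if g i ω = d then (1 : ℝ) else 0) / piP p g d i)
      = (if g i ω = d then y i ω * p ω / piP p g d i else 0) := by
    intro ω _; by_cases hg : g i ω = d <;> simp [hg] <;> ring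
  rw [Finset.sum_congr rfl h, ← Finset.sum_filter, ← Finset.sum_div,
    key1 p y g d i hpi, mul_div_assoc, div_self hpi.ne', mul_one]

lemma E_sqhalf (hp : ∀ ω, 0 ≤ p ω) (hnurva : NURVA p y g) (i : Fin N)
    (hpi : 0 < piP p g d i) :
    ∑ ω, p ω * ((y i ω ^ 2 / 2) * (if g i ω = d then (1 : ℝ) else 0) / piP p g d i)
      = epo p y g d i ^ 2 / 2 := by
  have h : ∀ ω ∈ (Finset.univ : Finset Ω),
      p ω * ((y i ω ^ 2 / 2) * (if g i ω = d then (1 : ℝ) else 0) / piP p g d i)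
      = (if g i ω = d then (y i ω ^ 2 * p ω) / (2 * piP p g d i) else 0) := by
    intro ω _; by_cases hg : g i ω = d <;> simp [hg] <;> ring
  rw [Finset.sum_congr rfl h, ← Finset.sum_filter, ← Finset.sum_div,
    key2 p y g d hp hnurva i hpi]
  field_simp

lemma E_pairprod (hp : ∀ ω, 0 ≤ p ω) (hnurva : NURVA p y g) (i j : Fin N)
    (hpi : 0 < piP p g d i) (hpj : 0 < piP p g d j) :
    ∑ ω, p ω * ((y i ω * (if g i ω = d then (1 : ℝ) else 0) / piP p g d i)
        * (y j ω * (if g j ω = d then (1 : ℝ) else 0) / piP p g d j))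
      = epo p y g d i * epo p y g d j * piP2 p g d i j / (piP p g d i * piP p g d j) := by
  have h : ∀ ω ∈ (Finset.univ : Finset Ω),
      p ω * ((y i ω * (if g i ω = d then (1 : ℝ) else 0) / piP p g d i)
        * (y j ω * (if g j ω = d then (1 : ℝ) else 0) / piP p g d j))
      = (if g i ω = d ∧ g j ω = d then
          (y i ω * y j ω * p ω) / (piP p g d i * piP p g d j) else 0) := by
    intro ω _
    by_cases hgi : g i ω = d <;> by_cases hgj : g j ω = d <;> simp [hgi, hgj] <;> ring
  rw [Finset.sum_congr rfl h, ← Finset.sum_filter, ← Finset.sum_div,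
    key3 p y g d hp hnurva i j hpi hpj]

lemma E_pos (hp : ∀ ω, 0 ≤ p ω) (hnurva : NURVA p y g) (i j : Fin N)
    (hpi : 0 < piP p g d i) (hpj : 0 < piP p g d j) (hij : 0 < piP2 p g d i j) :
    ∑ ω, p ω * (((piP2 p g d i j - piP p g d i * piP p g d j) / (piP p g d i * piP p g d j))
        * (y i ω * y j ω) * (if g i ω = d ∧ g j ω = d then (1 : ℝ) else 0) / piP2 p g d i j)
      = ((piP2 p g d i j - piP p g d i * piP p g d j) / (piP p g d i * piP p g d j))
          * (epo p y g d i * epo p y g d j) := by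
  set c := (piP2 p g d i j - piP p g d i * piP p g d j) / (piP p g d i * piP p g d j)
  have h : ∀ ω ∈ (Finset.univ : Finset Ω),
      p ω * (c * (y i ω * y j ω) * (if g i ω = d ∧ g j ω = d then (1 : ℝ) else 0)
        / piP2 p g d i j)
      = (if g i ω = d ∧ g j ω = d then
          c * (y i ω * y j ω * p ω) / piP2 p g d i j else 0) := by
    intro ω _
    by_cases hgi : g i ω = d ∧ g j ω = d <;> simp [hgi] <;> ring
  rw [Finset.sum_congr rfl h, ← Finset.sum_filter]
  have : ∀ ω ∈ Finset.univ.filter (fun ω => g i ω = d ∧ g j ω = d),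
      c * (y i ω * y j ω * p ω) / piP2 p g d i j
      = (c / piP2 p g d i j) * (y i ω * y j ω * p ω) := fun ω _ => by ring
  rw [Finset.sum_congr rfl this, ← Finset.mul_sum, key3 p y g d hp hnurva i j hpi hpj]
  field_simp

lemma vari_eq (hps : ∑ ω, p ω = 1) (X : Ω → ℝ) :
    vari p X = expec p (fun ω => X ω ^ 2) - (expec p X) ^ 2 := by
  have h : ∀ ω ∈ (Finset.univ : Finset Ω),
      p ω * (X ω - expec p X) ^ 2
      = p ω * X ω ^ 2 - expec p X * (2 * (p ω * X ω)) + (expec p X) ^ 2 * p ω :=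
    fun ω _ => by ring
  rw [vari]
  show (∑ ω, p ω * (X ω - expec p X) ^ 2) = _
  rw [Finset.sum_congr rfl h, Finset.sum_add_distrib, Finset.sum_sub_distrib,
    ← Finset.mul_sum, ← Finset.mul_sum, ← Finset.mul_sum, hps, mul_one]
  simp only [expec]
  ring

end Aux

section Main
variable {Ω E : Type*} [Fintype Ω] [DecidableEq E] {N : ℕ}
variable (p : Ω → ℝ) (y : Fin N → Ω → ℝ) (g : Fin N → Ω → E) (d : E)

lemma swap1 (c : ℝ) (F : Fin N → Ω → ℝ) :
    (∑ ω, p ω * (c * ∑ i : Fin N, F i ω))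
      = c * ∑ i : Fin N, ∑ ω, p ω * F i ω := by
  have h1 : ∀ ω ∈ (Finset.univ : Finset Ω), p ω * (c * ∑ i : Fin N, F i ω)
      = c * ∑ i : Fin N, p ω * F i ω := by
    intro ω _
    simp only [Finset.mul_sum]
    exact Finset.sum_congr rfl fun i _ => by ring
  rw [Finset.sum_congr rfl h1, ← Finset.mul_sum, Finset.sum_comm]

lemma swap2 (c : ℝ) (F : Fin N → Fin N → Ω → ℝ) :
    (∑ ω, p ω * (c * ∑ i : Fin N, ∑ j : Fin N, F i j ω))
      = c * ∑ i : Fin N, ∑ j : Fin N, ∑ ω, p ω * F i j ω := by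
  have h1 : ∀ ω ∈ (Finset.univ : Finset Ω), p ω * (c * ∑ i : Fin N, ∑ j : Fin N, F i j ω)
      = c * ∑ i : Fin N, ∑ j : Fin N, p ω * F i j ω := by
    intro ω _
    simp only [Finset.mul_sum]
    exact Finset.sum_congr rfl fun i _ => Finset.sum_congr rfl fun j _ => by ring
  rw [Finset.sum_congr rfl h1, ← Finset.mul_sum, Finset.sum_comm]
  refine congrArg (c * ·) (Finset.sum_congr rfl fun i _ => ?_)
  rw [Finset.sum_comm]

lemma E_ht (hp : ∀ ω, 0 ≤ p ω) (hpos : ∀ i : Fin N, 0 < piP p g d i) :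
    expec p (ht p y g d) = (1 / (N : ℝ)) * ∑ i, epo p y g d i := by
  simp only [expec, ht]
  rw [swap1 p (1 / (N : ℝ)) (fun i ω => y i ω * (if g i ω = d then (1 : ℝ) else 0) / piP p g d i)]
  exact congrArg _ (Finset.sum_congr rfl fun i _ => E_single p y g d hp i (hpos i))

lemma E_htsq (hp : ∀ ω, 0 ≤ p ω) (hnurva : NURVA p y g)
    (hpos : ∀ i : Fin N, 0 < piP p g d i) :
    expec p (fun ω => ht p y g d ω ^ 2)
      = ((N : ℝ) ^ 2)⁻¹ * ∑ i, ∑ j,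
          epo p y g d i * epo p y g d j * piP2 p g d i j / (piP p g d i * piP p g d j) := by
  have hsq : ∀ ω, ht p y g d ω ^ 2
      = ((N : ℝ) ^ 2)⁻¹ * ∑ i : Fin N, ∑ j : Fin N,
          (y i ω * (if g i ω = d then (1 : ℝ) else 0) / piP p g d i)
            * (y j ω * (if g j ω = d then (1 : ℝ) else 0) / piP p g d j) := by
    intro ω
    rw [ht, mul_pow, div_pow, one_pow, one_div,
      sq (∑ i : Fin N, y i ω * (if g i ω = d then (1 : ℝ) else 0) / piP p g d i),
      Finset.sum_mul_sum]
  simp only [expec, hsq]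
  rw [swap2 p (((N : ℝ) ^ 2)⁻¹)
    (fun i j ω => (y i ω * (if g i ω = d then (1 : ℝ) else 0) / piP p g d i)
      * (y j ω * (if g j ω = d then (1 : ℝ) else 0) / piP p g d j))]
  exact congrArg _ (Finset.sum_congr rfl fun i _ => Finset.sum_congr rfl fun j _ =>
    E_pairprod p y g d hp hnurva i j (hpos i) (hpos j))

end Main

/-- Under NURVA and individual positivity, the bias of the conservative
variance estimator is exactly
`E[V̂_C] − Var[ŷ(d)] = N⁻² ∑_{(i,j) : π_ij(d) = 0} (ȳ_i(d) + ȳ_j(d))² / 2`. -/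
theorem conservative_variance_estimator_bias {Ω E : Type*} [Fintype Ω] [Nonempty Ω]
    [DecidableEq E] {N : ℕ} (hN : 1 ≤ N)
    (p : Ω → ℝ) (hp : ∀ ω, 0 ≤ p ω) (hps : ∑ ω, p ω = 1)
    (y : Fin N → Ω → ℝ) (g : Fin N → Ω → E) (d : E)
    (hnurva : NURVA p y g)
    (hpos : ∀ i : Fin N, 0 < piP p g d i) :
    expec p (fun ω => ((N : ℝ) ^ 2)⁻¹ * ∑ i : Fin N, ∑ j : Fin N,
          if 0 < piP2 p g d i j then
            ((piP2 p g d i j - piP p g d i * piP p g d j) / (piP p g d i * piP p g d j))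
              * (y i ω * y j ω)
              * (if g i ω = d ∧ g j ω = d then (1 : ℝ) else 0) / piP2 p g d i j
          else
            (y i ω ^ 2 / 2) * (if g i ω = d then (1 : ℝ) else 0) / piP p g d i
              + (y j ω ^ 2 / 2) * (if g j ω = d then (1 : ℝ) else 0) / piP p g d j)
      - vari p (ht p y g d)
      = ((N : ℝ) ^ 2)⁻¹ * ∑ i : Fin N, ∑ j : Fin N,
          if piP2 p g d i j = 0 then (epo p y g d i + epo p y g d j) ^ 2 / 2 else 0 := by
  classical
  -- abbreviations
  set e : Fin N → ℝ := epo p y g d with he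
  -- expectation of the estimator, pair by pair
  have hT : ∀ i j : Fin N,
      (∑ ω, p ω * (if 0 < piP2 p g d i j then
          ((piP2 p g d i j - piP p g d i * piP p g d j) / (piP p g d i * piP p g d j))
            * (y i ω * y j ω)
            * (if g i ω = d ∧ g j ω = d then (1 : ℝ) else 0) / piP2 p g d i j
        else
          (y i ω ^ 2 / 2) * (if g i ω = d then (1 : ℝ) else 0) / piP p g d i
            + (y j ω ^ 2 / 2) * (if g j ω = d then (1 : ℝ) else 0) / piP p g d j))
      = (if 0 < piP2 p g d i j then
          ((piP2 p g d i j - piP p g d i * piP p g d j) / (piP p g d i * piP p g d j))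
            * (e i * e j)
        else e i ^ 2 / 2 + e j ^ 2 / 2) := by
    intro i j
    by_cases hij : 0 < piP2 p g d i j
    · simp only [if_pos hij]
      exact E_pos p y g d hp hnurva i j (hpos i) (hpos j) hij
    · simp only [if_neg hij]
      have : ∀ ω ∈ (Finset.univ : Finset Ω),
          p ω * ((y i ω ^ 2 / 2) * (if g i ω = d then (1 : ℝ) else 0) / piP p g d i
            + (y j ω ^ 2 / 2) * (if g j ω = d then (1 : ℝ) else 0) / piP p g d j)
          = p ω * ((y i ω ^ 2 / 2) * (if g i ω = d then (1 : ℝ) else 0) / piP p g d i)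
            + p ω * ((y j ω ^ 2 / 2) * (if g j ω = d then (1 : ℝ) else 0) / piP p g d j) :=
        fun ω _ => by ring
      rw [Finset.sum_congr rfl this, Finset.sum_add_distrib,
        E_sqhalf p y g d hp hnurva i (hpos i), E_sqhalf p y g d hp hnurva j (hpos j)]
  -- left expectation
  have hE : expec p (fun ω => ((N : ℝ) ^ 2)⁻¹ * ∑ i : Fin N, ∑ j : Fin N,
      if 0 < piP2 p g d i j then
        ((piP2 p g d i j - piP p g d i * piP p g d j) / (piP p g d i * piP p g d j))
          * (y i ω * y j ω)
          * (if g i ω = d ∧ g j ω = d then (1 : ℝ) else 0) / piP2 p g d i j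
      else
        (y i ω ^ 2 / 2) * (if g i ω = d then (1 : ℝ) else 0) / piP p g d i
          + (y j ω ^ 2 / 2) * (if g j ω = d then (1 : ℝ) else 0) / piP p g d j)
      = ((N : ℝ) ^ 2)⁻¹ * ∑ i : Fin N, ∑ j : Fin N,
        (if 0 < piP2 p g d i j then
          ((piP2 p g d i j - piP p g d i * piP p g d j) / (piP p g d i * piP p g d j))
            * (e i * e j)
        else e i ^ 2 / 2 + e j ^ 2 / 2) := by
    rw [expec, swap2 p (((N : ℝ) ^ 2)⁻¹) (fun i j ω =>
      if 0 < piP2 p g d i j then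
        ((piP2 p g d i j - piP p g d i * piP p g d j) / (piP p g d i * piP p g d j))
          * (y i ω * y j ω)
          * (if g i ω = d ∧ g j ω = d then (1 : ℝ) else 0) / piP2 p g d i j
      else
        (y i ω ^ 2 / 2) * (if g i ω = d then (1 : ℝ) else 0) / piP p g d i
          + (y j ω ^ 2 / 2) * (if g j ω = d then (1 : ℝ) else 0) / piP p g d j)]
    exact congrArg _ (Finset.sum_congr rfl fun i _ => Finset.sum_congr rfl fun j _ => hT i j)
  -- variance
  have hNne : (N : ℝ) ≠ 0 := Nat.cast_ne_zero.mpr (by omega)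
  have hVar : vari p (ht p y g d)
      = ((N : ℝ) ^ 2)⁻¹ * ∑ i : Fin N, ∑ j : Fin N,
          (e i * e j * piP2 p g d i j / (piP p g d i * piP p g d j) - e i * e j) := by
    rw [vari_eq p hps, E_htsq p y g d hp hnurva hpos, E_ht p y g d hp hpos]
    have hsq : ((1 / (N : ℝ)) * ∑ i, e i) ^ 2
        = ((N : ℝ) ^ 2)⁻¹ * ∑ i : Fin N, ∑ j : Fin N, e i * e j := by
      rw [mul_pow, div_pow, one_pow, one_div, sq (∑ i, e i), Finset.sum_mul_sum]
    rw [hsq, ← mul_sub]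
    congr 1
    rw [← Finset.sum_sub_distrib]
    exact Finset.sum_congr rfl fun i _ => by rw [← Finset.sum_sub_distrib]
  rw [hE, hVar, ← mul_sub]
  congr 1
  rw [← Finset.sum_sub_distrib]
  refine Finset.sum_congr rfl fun i _ => ?_
  rw [← Finset.sum_sub_distrib]
  refine Finset.sum_congr rfl fun j _ => ?_
  by_cases hij : 0 < piP2 p g d i j
  · rw [if_pos hij, if_neg hij.ne']
    have hpi := (hpos i).ne'
    have hpj := (hpos j).ne'
    field_simp
    ring
  · have hz : piP2 p g d i j = 0 :=
      le_antisymm (not_lt.mp hij) (piP2_nonneg p g d hp i j)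
    rw [if_neg hij, if_pos hz, hz, mul_zero, zero_div]
    ring
end

section
/- Consistency of the Horvitz–Thompson estimator (Proposition 1): consider a sequence of finite design-based settings indexed by the population size N, each with its own Ω_N, p_N, raw potential outcomes y^{(N)}, exposure mappings g^{(N)}, and fixed exposure d, satisfying for every N: (i) individual positivity, π_i(d) > 0 for every unit i; (ii) NURVA; (iii) bounded reweighted revealable potential outcomes: there is c_N > 0 such that |y_i(ω)| · 1[g_i(ω)=d] / π_i(d) ≤ c_N for every unit i and every ω with p_N(ω) > 0; and (iv) with b_N = ∑_{i=1}^N ∑_{j=1}^N |π_ij(d) − π_i(d) π_j(d)|, the interaction condition c_N² b_N / N² → 0 as N → ∞. Then the Horvitz–Thompson estimator is consistent for the AEPO: for every ε > 0, Pr[ |ŷ(d) − ȳ(d)| ≥ ε ] → 0 as N → ∞. -/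
open Finset

section Aux

variable {Ω E : Type*} [Fintype Ω] [DecidableEq E] {N : ℕ}

lemma expec_sum (p : Ω → ℝ) (F : Fin N → Ω → ℝ) :
    expec p (fun ω => ∑ i, F i ω) = ∑ i, expec p (F i) := by
  unfold expec
  simp_rw [Finset.mul_sum]
  rw [Finset.sum_comm]

lemma expec_const_mul (p : Ω → ℝ) (a : ℝ) (X : Ω → ℝ) :
    expec p (fun ω => a * X ω) = a * expec p X := by
  unfold expec
  rw [Finset.mul_sum]
  exact Finset.sum_congr rfl (fun ω _ => by ring)

lemma cheb (p : Ω → ℝ) (hp : ∀ ω, 0 ≤ p ω) (X : Ω → ℝ) (ε : ℝ) (hε : 0 < ε) :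
    ∑ ω ∈ Finset.univ.filter (fun ω => ε ≤ |X ω - expec p X|), p ω ≤ vari p X / ε ^ 2 := by
  rw [le_div_iff₀ (by positivity)]
  calc (∑ ω ∈ Finset.univ.filter (fun ω => ε ≤ |X ω - expec p X|), p ω) * ε ^ 2
      = ∑ ω ∈ Finset.univ.filter (fun ω => ε ≤ |X ω - expec p X|), p ω * ε ^ 2 := by
        rw [Finset.sum_mul]
    _ ≤ ∑ ω ∈ Finset.univ.filter (fun ω => ε ≤ |X ω - expec p X|),
          p ω * (X ω - expec p X) ^ 2 := by
        apply Finset.sum_le_sum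
        intro ω hω
        simp only [Finset.mem_filter] at hω
        have h2 : ε ^ 2 ≤ (X ω - expec p X) ^ 2 := by
          have := sq_abs (X ω - expec p X)
          nlinarith [hω.2]
        nlinarith [hp ω]
    _ ≤ ∑ ω, p ω * (X ω - expec p X) ^ 2 :=
        Finset.sum_le_sum_of_subset_of_nonneg (Finset.filter_subset _ _)
          (fun ω _ _ => by have := hp ω; positivity)
    _ = vari p X := rfl

lemma key (p : Ω → ℝ) (hp : ∀ ω, 0 ≤ p ω) (hps : ∑ ω, p ω = 1)
    (y : Fin N → Ω → ℝ) (g : Fin N → Ω → E) (d : E)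
    (hpos : ∀ i, 0 < piP p g d i) (hnurva : NURVA p y g)
    (c : ℝ)
    (hbound : ∀ (i : Fin N) ω, 0 < p ω →
      |y i ω| * (if g i ω = d then (1 : ℝ) else 0) / piP p g d i ≤ c)
    (ε : ℝ) (hε : 0 < ε) :
    ∑ ω ∈ Finset.univ.filter (fun ω => ε ≤ |ht p y g d ω - aepo p y g d|), p ω ≤
      c ^ 2 * (∑ i, ∑ j, |piP2 p g d i j - piP p g d i * piP p g d j|) / (N : ℝ) ^ 2 / ε ^ 2 := by
  -- choose a support point realizing exposure d for each unit
  have hex : ∀ i : Fin N, ∃ ω, 0 < p ω ∧ g i ω = d := by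
    intro i
    by_contra h
    push_neg at h
    have h0 : piP p g d i = 0 := by
      apply Finset.sum_eq_zero
      intro ω hω
      simp only [Finset.mem_filter] at hω
      rcases (hp ω).eq_or_lt with h1 | h1
      · exact h1.symm
      · exact absurd hω.2 (h ω h1)
    exact absurd h0 (hpos i).ne'
  choose ω0 hω0p hω0g using hex
  set yt : Fin N → ℝ := fun i => y i (ω0 i) with hyt
  set f : Fin N → Ω → ℝ :=
    fun i ω => y i ω * (if g i ω = d then (1 : ℝ) else 0) / piP p g d i with hf
  have hpiP_eq : ∀ i, piP p g d i = ∑ ω, p ω * (if g i ω = d then (1 : ℝ) else 0) := by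
    intro i
    rw [piP, Finset.sum_filter]
    exact Finset.sum_congr rfl (fun ω _ => by by_cases h : g i ω = d <;> simp [h])
  have hy : ∀ (i : Fin N) ω, 0 < p ω → g i ω = d → y i ω = yt i := by
    intro i ω h1 h2
    exact hnurva ω (ω0 i) h1 (hω0p i) i (by rw [h2, hω0g i])
  have hE1 : ∀ i, expec p (f i) = yt i := by
    intro i
    have step : expec p (f i) =
        (yt i / piP p g d i) * ∑ ω, p ω * (if g i ω = d then (1 : ℝ) else 0) := by
      rw [expec, Finset.mul_sum]
      apply Finset.sum_congr rfl
      intro ω _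
      rcases (hp ω).eq_or_lt with h0 | h0
      · rw [← h0]; ring
      · by_cases hg : g i ω = d
        · rw [hf]; simp only [hg, if_true]
          rw [hy i ω h0 hg]; ring
        · rw [hf]; simp only [hg, if_false]; ring
    rw [step, ← hpiP_eq, div_mul_cancel₀ _ (hpos i).ne']
  have hpiP2_eq : ∀ i j, piP2 p g d i j =
      ∑ ω, p ω * ((if g i ω = d then (1 : ℝ) else 0) * (if g j ω = d then (1 : ℝ) else 0)) := by
    intro i j
    rw [piP2, Finset.sum_filter]
    apply Finset.sum_congr rfl
    intro ω _
    by_cases h1 : g i ω = d <;> by_cases h2 : g j ω = d <;> simp [h1, h2]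
  have hE2 : ∀ i j, expec p (fun ω => f i ω * f j ω) =
      yt i * yt j / (piP p g d i * piP p g d j) * piP2 p g d i j := by
    intro i j
    have step : expec p (fun ω => f i ω * f j ω) =
        (yt i * yt j / (piP p g d i * piP p g d j)) *
          ∑ ω, p ω * ((if g i ω = d then (1 : ℝ) else 0) * (if g j ω = d then (1 : ℝ) else 0)) := by
      rw [expec, Finset.mul_sum]
      apply Finset.sum_congr rfl
      intro ω _
      rcases (hp ω).eq_or_lt with h0 | h0
      · rw [← h0]; ring
      · by_cases h1 : g i ω = d
        · by_cases h2 : g j ω = d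
          · rw [hf]; simp only [h1, h2, if_true]
            rw [hy i ω h0 h1, hy j ω h0 h2]; ring
          · rw [hf]; simp only [h1, h2, if_true, if_false]; ring
        · rw [hf]; simp only [h1, if_false]; ring
    rw [step, ← hpiP2_eq]
  have hyc : ∀ i, |yt i| / piP p g d i ≤ c := by
    intro i
    have := hbound i (ω0 i) (hω0p i)
    rw [hω0g i, if_pos rfl, mul_one] at this
    exact this
  -- expectation of ht equals aepo
  have hht : ht p y g d = fun ω => (1 / (N : ℝ)) * ∑ i, f i ω := rfl
  have hEht : expec p (ht p y g d) = (1 / (N : ℝ)) * ∑ i, yt i := by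
    rw [hht, expec_const_mul, expec_sum]
    simp_rw [hE1]
  have hepo : ∀ i, epo p y g d i = yt i := by
    intro i
    have hnum : (∑ ω ∈ Finset.univ.filter (fun ω => g i ω = d), y i ω * p ω)
        = yt i * piP p g d i := by
      rw [piP, Finset.mul_sum]
      apply Finset.sum_congr rfl
      intro ω hω
      simp only [Finset.mem_filter] at hω
      rcases (hp ω).eq_or_lt with h0 | h0
      · rw [← h0]; ring
      · rw [hy i ω h0 hω.2]
    rw [epo, hnum, mul_div_assoc, div_self (hpos i).ne', mul_one]
  have haepo : aepo p y g d = expec p (ht p y g d) := by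
    rw [aepo, hEht]
    congr 1
    exact Finset.sum_congr rfl (fun i _ => hepo i)
  -- covariance
  have hcov : ∀ i j, expec p (fun ω => (f i ω - yt i) * (f j ω - yt j)) =
      expec p (fun ω => f i ω * f j ω) - yt i * yt j := by
    intro i j
    have hterm : ∀ ω, p ω * ((f i ω - yt i) * (f j ω - yt j)) =
        p ω * (f i ω * f j ω) - yt j * (p ω * f i ω) - yt i * (p ω * f j ω)
          + yt i * yt j * p ω := by intro ω; ring
    unfold expec
    simp_rw [hterm]
    rw [Finset.sum_add_distrib, Finset.sum_sub_distrib, Finset.sum_sub_distrib,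
      ← Finset.mul_sum, ← Finset.mul_sum, ← Finset.mul_sum, hps]
    have e1 : ∑ ω, p ω * f i ω = yt i := hE1 i
    have e2 : ∑ ω, p ω * f j ω = yt j := hE1 j
    rw [e1, e2]
    ring
  -- variance expansion
  have hvar : vari p (ht p y g d) = (1 / (N : ℝ)) ^ 2 *
      ∑ i, ∑ j, (expec p (fun ω => f i ω * f j ω) - yt i * yt j) := by
    unfold vari
    rw [hEht]
    have hpt : (fun ω => (ht p y g d ω - (1 / (N : ℝ)) * ∑ i, yt i) ^ 2) =
        fun ω => (1 / (N : ℝ)) ^ 2 * ∑ i, ∑ j, (f i ω - yt i) * (f j ω - yt j) := by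
      funext ω
      rw [hht]
      rw [← mul_sub, ← Finset.sum_sub_distrib, mul_pow]
      congr 1
      rw [sq, Finset.sum_mul_sum]
    rw [hpt, expec_const_mul]
    congr 1
    rw [expec_sum]
    apply Finset.sum_congr rfl
    intro i _
    rw [expec_sum]
    exact Finset.sum_congr rfl (fun j _ => hcov i j)
  -- covariance bound
  have hcb : ∀ i j, expec p (fun ω => f i ω * f j ω) - yt i * yt j ≤
      c ^ 2 * |piP2 p g d i j - piP p g d i * piP p g d j| := by
    intro i j
    rw [hE2 i j]
    have hrw : yt i * yt j / (piP p g d i * piP p g d j) * piP2 p g d i j - yt i * yt j =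
        (yt i / piP p g d i) * (yt j / piP p g d j) *
          (piP2 p g d i j - piP p g d i * piP p g d j) := by
      field_simp [(hpos i).ne', (hpos j).ne']
    rw [hrw]
    calc (yt i / piP p g d i) * (yt j / piP p g d j) *
          (piP2 p g d i j - piP p g d i * piP p g d j)
        ≤ |(yt i / piP p g d i) * (yt j / piP p g d j) *
            (piP2 p g d i j - piP p g d i * piP p g d j)| := le_abs_self _
      _ = (|yt i| / piP p g d i) * (|yt j| / piP p g d j) *
            |piP2 p g d i j - piP p g d i * piP p g d j| := by
          rw [abs_mul, abs_mul, abs_div, abs_div, abs_of_pos (hpos i), abs_of_pos (hpos j)]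
      _ ≤ c ^ 2 * |piP2 p g d i j - piP p g d i * piP p g d j| := by
          have h1 := hyc i
          have h2 := hyc j
          have h1' : 0 ≤ |yt i| / piP p g d i := div_nonneg (abs_nonneg _) (hpos i).le
          have h2' : 0 ≤ |yt j| / piP p g d j := div_nonneg (abs_nonneg _) (hpos j).le
          have h3 : 0 ≤ |piP2 p g d i j - piP p g d i * piP p g d j| := abs_nonneg _
          have h4 : |yt i| / piP p g d i * (|yt j| / piP p g d j) ≤ c * c :=
            mul_le_mul h1 h2 h2' (h1'.trans h1)
          calc |yt i| / piP p g d i * (|yt j| / piP p g d j) *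
                |piP2 p g d i j - piP p g d i * piP p g d j|
              ≤ c * c * |piP2 p g d i j - piP p g d i * piP p g d j| :=
                mul_le_mul_of_nonneg_right h4 h3
            _ = c ^ 2 * |piP2 p g d i j - piP p g d i * piP p g d j| := by ring
  -- variance bound
  have hvb : vari p (ht p y g d) ≤
      c ^ 2 * (∑ i, ∑ j, |piP2 p g d i j - piP p g d i * piP p g d j|) / (N : ℝ) ^ 2 := by
    rw [hvar]
    have hS : ∑ i, ∑ j, (expec p (fun ω => f i ω * f j ω) - yt i * yt j) ≤
        ∑ i, ∑ j, c ^ 2 * |piP2 p g d i j - piP p g d i * piP p g d j| :=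
      Finset.sum_le_sum (fun i _ => Finset.sum_le_sum (fun j _ => hcb i j))
    have hN2 : (0 : ℝ) ≤ (1 / (N : ℝ)) ^ 2 := by positivity
    calc (1 / (N : ℝ)) ^ 2 * ∑ i, ∑ j, (expec p (fun ω => f i ω * f j ω) - yt i * yt j)
        ≤ (1 / (N : ℝ)) ^ 2 * ∑ i, ∑ j, c ^ 2 * |piP2 p g d i j - piP p g d i * piP p g d j| :=
          mul_le_mul_of_nonneg_left hS hN2
      _ = c ^ 2 * (∑ i, ∑ j, |piP2 p g d i j - piP p g d i * piP p g d j|) / (N : ℝ) ^ 2 := by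
          simp_rw [← Finset.mul_sum]
          ring
  -- conclude with Chebyshev
  have hch := cheb p hp (ht p y g d) ε hε
  rw [← haepo] at hch
  refine hch.trans ?_
  gcongr

end Aux

/-- Proposition 1: Consistency of the Horvitz–Thompson estimator. For a
sequence of finite design-based settings indexed by population size `N` satisfying
individual positivity, NURVA, bounded reweighted revealable potential outcomes
(`|y_i(ω)|·1[g_i(ω)=d]/π_i(d) ≤ c_N` on the support of `p_N`), and the interaction
condition `c_N² b_N / N² → 0` with `b_N = ∑_i ∑_j |π_ij(d) − π_i(d)π_j(d)|`, the
Horvitz–Thompson estimator is consistent for the AEPO: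
`Pr[|ŷ(d) − ȳ(d)| ≥ ε] → 0` for every `ε > 0`. -/
theorem ht_consistent_for_aepo
    (Ω : ℕ → Type*) [∀ N, Fintype (Ω N)] [∀ N, Nonempty (Ω N)]
    (E : ℕ → Type*) [∀ N, DecidableEq (E N)]
    (p : ∀ N, Ω N → ℝ)
    (hp : ∀ N (ω : Ω N), 0 ≤ p N ω) (hps : ∀ N, ∑ ω, p N ω = 1)
    (y : ∀ N, Fin N → Ω N → ℝ) (g : ∀ N, Fin N → Ω N → E N) (d : ∀ N, E N)
    (hpos : ∀ N (i : Fin N), 0 < piP (p N) (g N) (d N) i)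
    (hnurva : ∀ N, NURVA (p N) (y N) (g N))
    (c : ℕ → ℝ) (hc : ∀ N, 0 < c N)
    (hbound : ∀ N (i : Fin N) (ω : Ω N), 0 < p N ω →
      |y N i ω| * (if g N i ω = d N then (1 : ℝ) else 0) / piP (p N) (g N) (d N) i ≤ c N)
    (hinter : Filter.Tendsto (fun N : ℕ =>
      c N ^ 2 * (∑ i : Fin N, ∑ j : Fin N,
          |piP2 (p N) (g N) (d N) i j - piP (p N) (g N) (d N) i * piP (p N) (g N) (d N) j|)
        / (N : ℝ) ^ 2) Filter.atTop (nhds 0)) :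
    ∀ ε > (0 : ℝ), Filter.Tendsto (fun N : ℕ =>
      ∑ ω ∈ Finset.univ.filter (fun ω : Ω N =>
          ε ≤ |ht (p N) (y N) (g N) (d N) ω - aepo (p N) (y N) (g N) (d N)|), p N ω)
      Filter.atTop (nhds 0) := by
  intro ε hε
  have hb := fun N => key (p N) (hp N) (hps N) (y N) (g N) (d N) (hpos N) (hnurva N)
    (c N) (hbound N) ε hε
  have hnn : ∀ N : ℕ, 0 ≤ ∑ ω ∈ Finset.univ.filter (fun ω : Ω N =>
      ε ≤ |ht (p N) (y N) (g N) (d N) ω - aepo (p N) (y N) (g N) (d N)|), p N ω :=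
    fun N => Finset.sum_nonneg (fun ω _ => hp N ω)
  have hg : Filter.Tendsto (fun N : ℕ =>
      c N ^ 2 * (∑ i : Fin N, ∑ j : Fin N,
          |piP2 (p N) (g N) (d N) i j - piP (p N) (g N) (d N) i * piP (p N) (g N) (d N) j|)
        / (N : ℝ) ^ 2 / ε ^ 2) Filter.atTop (nhds 0) := by
    simpa using hinter.div_const (ε ^ 2)
  exact squeeze_zero hnn hb hg
end

section
/- Variance of the regression-adjusted estimator with fixed predictions: suppose NURVA holds and π_i(d) > 0 for every unit i, and let f_1, …, f_N be fixed (nonrandom) real numbers. Then the regression-adjusted estimator ŷ_R(d)(ω) = (1/N) ∑_{i=1}^N (y_i(ω) − f_i) · 1[g_i(ω)=d] / π_i(d) + (1/N) ∑_{i=1}^N f_i satisfies Var[ŷ_R(d)] = N^{-2} ∑_{i=1}^N ∑_{j=1}^N ((π_ij(d) − π_i(d) π_j(d)) / (π_i(d) π_j(d))) · (ȳ_i(d) − f_i)(ȳ_j(d) − f_j). -/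
open Finset

lemma expec_congr' {Ω : Type*} [Fintype Ω] {p : Ω → ℝ} (hp : ∀ ω, 0 ≤ p ω)
    {X Y : Ω → ℝ} (h : ∀ ω, 0 < p ω → X ω = Y ω) : expec p X = expec p Y := by
  unfold expec
  refine Finset.sum_congr rfl fun ω _ => ?_
  rcases eq_or_lt_of_le (hp ω) with h0 | h0
  · rw [← h0]; ring
  · rw [h ω h0]

lemma nurva_epo' {Ω E : Type*} [Fintype Ω] [DecidableEq E] {N : ℕ}
    (p : Ω → ℝ) (hp : ∀ ω, 0 ≤ p ω)
    (y : Fin N → Ω → ℝ) (g : Fin N → Ω → E) (d : E)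
    (hnurva : NURVA p y g) (i : Fin N) (hpos : 0 < piP p g d i)
    (ω : Ω) (hω : 0 < p ω) (hg : g i ω = d) :
    y i ω = epo p y g d i := by
  have hsum : ∑ ω' ∈ Finset.univ.filter (fun ω' => g i ω' = d), y i ω' * p ω'
      = y i ω * piP p g d i := by
    rw [piP, Finset.mul_sum]
    refine Finset.sum_congr rfl fun ω' hω' => ?_
    rcases eq_or_lt_of_le (hp ω') with h0 | h0
    · rw [← h0]; ring
    · have hgg : g i ω' = g i ω := by
        simp only [Finset.mem_filter, Finset.mem_univ, true_and] at hω'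
        rw [hω', hg]
      rw [hnurva ω' ω h0 hω i hgg]
  rw [epo, hsum, mul_div_assoc, div_self hpos.ne', mul_one]

/-- Variance of the regression-adjusted estimator with fixed (nonrandom)
predictions `f_1, …, f_N`, under NURVA and individual positivity:
`Var[ŷ_R(d)] = N⁻² ∑_i ∑_j ((π_ij(d) − π_i(d)π_j(d))/(π_i(d)π_j(d)))
  (ȳ_i(d) − f_i)(ȳ_j(d) − f_j)`. -/
theorem regression_adjusted_variance {Ω E : Type*} [Fintype Ω] [Nonempty Ω] [DecidableEq E]
    {N : ℕ} (hN : 1 ≤ N)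
    (p : Ω → ℝ) (hp : ∀ ω, 0 ≤ p ω) (hps : ∑ ω, p ω = 1)
    (y : Fin N → Ω → ℝ) (g : Fin N → Ω → E) (d : E)
    (hnurva : NURVA p y g)
    (hpos : ∀ i : Fin N, 0 < piP p g d i)
    (f : Fin N → ℝ) :
    vari p (fun ω =>
        (1 / (N : ℝ)) * ∑ i, (y i ω - f i) * (if g i ω = d then (1 : ℝ) else 0)
            / piP p g d i
          + (1 / (N : ℝ)) * ∑ i, f i)
      = ((N : ℝ) ^ 2)⁻¹ * ∑ i : Fin N, ∑ j : Fin N,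
          ((piP2 p g d i j - piP p g d i * piP p g d j) / (piP p g d i * piP p g d j))
            * ((epo p y g d i - f i) * (epo p y g d j - f j)) := by
  classical
  set a : Fin N → ℝ := fun i => epo p y g d i - f i with ha
  set ind : Fin N → Ω → ℝ := fun i ω => if g i ω = d then 1 else 0 with hind
  set S : Ω → ℝ := fun ω => ∑ i, a i * ind i ω / piP p g d i with hS
  -- basic sums
  have hIndSum : ∀ i, ∑ ω, p ω * ind i ω = piP p g d i := by
    intro i
    rw [piP, Finset.sum_filter]
    simp [hind, mul_ite]
  have hInd2Sum : ∀ i j, ∑ ω, p ω * (ind i ω * ind j ω) = piP2 p g d i j := by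
    intro i j
    rw [piP2, Finset.sum_filter]
    refine Finset.sum_congr rfl fun ω _ => ?_
    by_cases h1 : g i ω = d <;> by_cases h2 : g j ω = d <;> simp [hind, h1, h2]
  have hES : expec p S = ∑ i, a i := by
    unfold expec
    simp only [hS, Finset.mul_sum]
    rw [Finset.sum_comm]
    refine Finset.sum_congr rfl fun i _ => ?_
    have : ∀ ω, p ω * (a i * ind i ω / piP p g d i)
        = (a i / piP p g d i) * (p ω * ind i ω) := fun ω => by ring
    simp only [this]
    rw [← Finset.mul_sum, hIndSum i, div_mul_eq_mul_div, mul_div_assoc, div_self (hpos i).ne', mul_one]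
  have hES2 : expec p (fun ω => S ω ^ 2)
      = ∑ i, ∑ j, a i * a j * piP2 p g d i j / (piP p g d i * piP p g d j) := by
    unfold expec
    have hsq : ∀ ω, S ω ^ 2 = ∑ i, ∑ j,
        (a i * a j / (piP p g d i * piP p g d j)) * (ind i ω * ind j ω) := by
      intro ω
      rw [hS, pow_two, Finset.sum_mul_sum]
      refine Finset.sum_congr rfl fun i _ => Finset.sum_congr rfl fun j _ => by ring
    simp only [hsq, Finset.mul_sum]
    rw [Finset.sum_comm]
    refine Finset.sum_congr rfl fun i _ => ?_
    rw [Finset.sum_comm]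
    refine Finset.sum_congr rfl fun j _ => ?_
    have : ∀ ω, p ω * ((a i * a j / (piP p g d i * piP p g d j)) * (ind i ω * ind j ω))
        = (a i * a j / (piP p g d i * piP p g d j)) * (p ω * (ind i ω * ind j ω)) :=
      fun ω => by ring
    simp only [this]
    rw [← Finset.mul_sum, hInd2Sum i j]
    ring
  -- pointwise identification of the estimator on the support of p
  set C : ℝ := (1 / (N : ℝ)) * ∑ i, f i with hC
  set X : Ω → ℝ := fun ω =>
      (1 / (N : ℝ)) * ∑ i, (y i ω - f i) * (if g i ω = d then (1 : ℝ) else 0)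
        / piP p g d i + (1 / (N : ℝ)) * ∑ i, f i with hX
  set X' : Ω → ℝ := fun ω => (1 / (N : ℝ)) * S ω + C with hX'
  have hXX' : ∀ ω, 0 < p ω → X ω = X' ω := by
    intro ω hω
    simp only [hX, hX', hS, hC]
    congr 1
    congr 1
    refine Finset.sum_congr rfl fun i _ => ?_
    by_cases hgi : g i ω = d
    · rw [nurva_epo' p hp y g d hnurva i (hpos i) ω hω hgi]
    · simp [hind, hgi]
  have hvariX : vari p X = vari p X' := by
    have hE : expec p X = expec p X' := expec_congr' hp hXX'
    unfold vari
    exact expec_congr' hp (fun ω h0 => by rw [hXX' ω h0, hE])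
  set μ : ℝ := ∑ i, a i with hμ
  have hEX' : expec p X' = (1 / (N : ℝ)) * μ + C := by
    unfold expec
    have h1 : ∀ ω, p ω * X' ω = (1 / (N : ℝ)) * (p ω * S ω) + C * p ω := by
      intro ω; simp only [hX']; ring
    simp only [h1]
    rw [Finset.sum_add_distrib, ← Finset.mul_sum, ← Finset.mul_sum, hps, mul_one]
    congr 1
    rw [show (∑ ω, p ω * S ω) = expec p S from rfl, hES]
  have hES2' : ∑ ω, p ω * S ω ^ 2
      = ∑ i, ∑ j, a i * a j * piP2 p g d i j / (piP p g d i * piP p g d j) := hES2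
  have hvarX' : vari p X'
      = (1 / (N : ℝ)) ^ 2 *
        ((∑ i, ∑ j, a i * a j * piP2 p g d i j / (piP p g d i * piP p g d j)) - μ ^ 2) := by
    unfold vari expec
    rw [show (∑ ω, p ω * X' ω) = (1 / (N : ℝ)) * μ + C from hEX']
    have h2 : ∀ ω, p ω * (X' ω - ((1 / (N : ℝ)) * μ + C)) ^ 2
        = (1 / (N : ℝ)) ^ 2 *
          (p ω * S ω ^ 2 - 2 * μ * (p ω * S ω) + μ ^ 2 * p ω) := by
      intro ω; simp only [hX']; ring
    simp only [h2]
    rw [← Finset.mul_sum]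
    congr 1
    rw [Finset.sum_add_distrib, Finset.sum_sub_distrib, ← Finset.mul_sum, ← Finset.mul_sum,
      hps, mul_one, hES2',
      show (∑ ω, p ω * S ω) = expec p S from rfl, hES]
    ring
  have hμsq : μ ^ 2 = ∑ i, ∑ j, a i * a j := by
    rw [hμ, pow_two, Finset.sum_mul_sum]
  rw [show vari p X = vari p X' from hvariX, hvarX', hμsq, ← Finset.sum_sub_distrib]
  have hNpow : (1 / (N : ℝ)) ^ 2 = ((N : ℝ) ^ 2)⁻¹ := by
    rw [one_div, inv_pow]
  rw [hNpow]
  congr 1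
  refine Finset.sum_congr rfl fun i _ => ?_
  rw [← Finset.sum_sub_distrib]
  refine Finset.sum_congr rfl fun j _ => ?_
  have hi := (hpos i).ne'
  have hj := (hpos j).ne'
  have hai : a i = epo p y g d i - f i := rfl
  have haj : a j = epo p y g d j - f j := rfl
  rw [← hai, ← haj]
  field_simp
end
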